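/- arXiv:2309.02018 — 2 statements merged into one kernel-verified Lean document; each statement's English description precedes it below -/
import Mathlib

section
/- Let R > 0, C ≥ 1, α > 0, C₀′ > 0, η₀′ > 0 be reals satisfying R^α ≥ 21C², C₀′·R^{−η₀′α} < 1/(32C²), and 36C²·R^{−η₀′α} ≤ 1/2. Suppose (h′_{p,q})_{0 ≤ p ≤ q} are nonnegative reals with h′_{q,q} ≤ R − (4C)⁻²R^α for all q ≥ 0 and h′_{p,q} ≤ C₀′·R^{α(1−η₀′)(q−p+1)} for all 0 ≤ p < q. Define recursively t′₀ := R − h′_{0,0} and, for q ≥ 1, t′_q := R − h′_{q,q} − Σ_{j=1}^q h′_{q−j,q} / (Π_{i=1}^j t′_{q−i}). Then t′_q ≥ (6C)⁻²·R^α for every q ≥ 0; in particular t′_q > 0 for all q. -/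
/-! Inductively, if `t′_p ≥ T := (6C)⁻² R^α` for all `p < q`, then the `j`-th term of the sum
defining `t′_q` is at most `C₀′ R^α r · (36 C² r)^j` with `r = R^{-η₀′α}`, a geometric series of
ratio at most `1/2`. The whole sum is therefore at most `C₀′ r R^α < R^α / (32C²)`, and
`t′_q ≥ R^α/(16C²) − R^α/(32C²) ≥ T`. -/

open Finset

lemma sum_Icc_one_half_pow_le_one (q : ℕ) : ∑ j ∈ Icc 1 q, (1 / 2 : ℝ) ^ j ≤ 1 := by
  have key : ∑ j ∈ Icc 1 q, (1 / 2 : ℝ) ^ j = 1 - (1 / 2) ^ q := by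
    induction q with
    | zero => simp
    | succ n ih => rw [sum_Icc_succ_top (by omega), ih]; ring
  rw [key]
  exact sub_le_self _ (by positivity)

lemma sum_div_prod_le_of_le_geometric {a t : ℕ → ℝ} {T K ρ : ℝ} {q : ℕ} (hT : 0 < T)
    (ht : ∀ p < q, T ≤ t p) (hK : 0 ≤ K) (hρ : 0 ≤ ρ) (hρ_half : ρ ≤ 1 / 2)
    (ha : ∀ j ∈ Icc 1 q, a j ≤ K * (ρ * T) ^ j) :
    ∑ j ∈ Icc 1 q, a j / ∏ i ∈ Icc 1 j, t (q - i) ≤ K := by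
  have hterm : ∀ j ∈ Icc 1 q, a j / ∏ i ∈ Icc 1 j, t (q - i) ≤ K * (1 / 2) ^ j := by
    intro j hj
    obtain ⟨-, hjq⟩ := mem_Icc.mp hj
    have hprod : T ^ j ≤ ∏ i ∈ Icc 1 j, t (q - i) := by
      simpa using prod_le_prod (s := Icc 1 j) (fun _ _ => hT.le)
        (fun i hi => ht (q - i) (by simp only [mem_Icc] at hi; omega))
    calc a j / ∏ i ∈ Icc 1 j, t (q - i) ≤ K * (ρ * T) ^ j / T ^ j :=
          div_le_div₀ (by positivity) (ha j hj) (by positivity) hprod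
      _ = K * ρ ^ j := by field_simp; ring
      _ ≤ K * (1 / 2) ^ j := by gcongr
  calc ∑ j ∈ Icc 1 q, a j / ∏ i ∈ Icc 1 j, t (q - i) ≤ ∑ j ∈ Icc 1 q, K * (1 / 2) ^ j :=
        sum_le_sum hterm
    _ = K * ∑ j ∈ Icc 1 q, (1 / 2 : ℝ) ^ j := (mul_sum ..).symm
    _ ≤ K := mul_le_of_le_one_right hK (sum_Icc_one_half_pow_le_one q)

lemma rpow_mul_sub_add_one_eq_pow {R : ℝ} (hR : 0 < R) (α η : ℝ) {j q : ℕ} (hj : j ≤ q) :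
    R ^ (α * (1 - η) * ((q : ℝ) - ((q - j : ℕ) : ℝ) + 1)) = (R ^ α * R ^ (-η * α)) ^ (j + 1) := by
  rw [← Real.rpow_add hR, ← Real.rpow_mul_natCast hR.le, Nat.cast_sub hj]
  push_cast
  ring_nf

lemma inv_sq_six_mul_add_le {C : ℝ} (hC : 0 < C) :
    ((6 * C) ^ 2)⁻¹ + 1 / (32 * C ^ 2) ≤ ((4 * C) ^ 2)⁻¹ := by
  field_simp
  norm_num

theorem stmt16_general (R C α C₀' η₀' : ℝ)
    (hR : 0 < R) (hC : 1 ≤ C) (hC₀' : 0 < C₀')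
    (h2 : C₀' * R ^ (-η₀' * α) < 1 / (32 * C ^ 2))
    (h3 : 36 * C ^ 2 * R ^ (-η₀' * α) ≤ 1 / 2)
    (h' : ℕ → ℕ → ℝ)
    (h'_diag : ∀ q : ℕ, h' q q ≤ R - ((4 * C) ^ 2)⁻¹ * R ^ α)
    (h'_off : ∀ p q : ℕ, p < q → h' p q ≤ C₀' * R ^ (α * (1 - η₀') * ((q : ℝ) - p + 1)))
    (t' : ℕ → ℝ)
    (ht'0 : t' 0 = R - h' 0 0)
    (ht' : ∀ q : ℕ, 1 ≤ q →
      t' q = R - h' q q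
        - ∑ j ∈ Finset.Icc 1 q, h' (q - j) q / ∏ i ∈ Finset.Icc 1 j, t' (q - i)) :
    ∀ q : ℕ, ((6 * C) ^ 2)⁻¹ * R ^ α ≤ t' q ∧ 0 < t' q := by
  set A := R ^ α
  set r := R ^ (-η₀' * α)
  have hC0 : 0 < C := by linarith
  have hA : 0 < A := Real.rpow_pos_of_pos hR α
  have hr : 0 < r := Real.rpow_pos_of_pos hR _
  have hrec : ∀ q, t' q = R - h' q q
      - ∑ j ∈ Icc 1 q, h' (q - j) q / ∏ i ∈ Icc 1 j, t' (q - i) := by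
    rintro (_ | q)
    · simp [ht'0]
    · exact ht' _ q.succ_pos
  have hratio : 36 * C ^ 2 * r * (((6 * C) ^ 2)⁻¹ * A) = A * r := by field_simp; ring
  have hsum : ∀ q, (∀ p < q, ((6 * C) ^ 2)⁻¹ * A ≤ t' p) →
      ∑ j ∈ Icc 1 q, h' (q - j) q / ∏ i ∈ Icc 1 j, t' (q - i) ≤ C₀' * (A * r) := by
    intro q ht
    refine sum_div_prod_le_of_le_geometric (by positivity) ht (by positivity) (by positivity) h3
      fun j hj => ?_
    obtain ⟨hj1, hjq⟩ := mem_Icc.mp hj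
    calc h' (q - j) q ≤ C₀' * (A * r) ^ (j + 1) := by
          simpa only [rpow_mul_sub_add_one_eq_pow hR α η₀' hjq] using h'_off (q - j) q (by omega)
      _ = _ := by rw [hratio]; ring
  have hsmall : C₀' * (A * r) ≤ 1 / (32 * C ^ 2) * A := by
    simpa [mul_comm, mul_left_comm] using mul_le_mul_of_nonneg_right h2.le hA.le
  intro q
  induction q using Nat.strong_induction_on with
  | _ q ih =>
    have hlow : ((6 * C) ^ 2)⁻¹ * A ≤ t' q := by
      have hsum_q := hsum q fun p hp => (ih p hp).1
      have hdiag_q := h'_diag q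
      have hgap := mul_le_mul_of_nonneg_right (inv_sq_six_mul_add_le hC0) hA.le
      rw [hrec q]
      linarith
    exact ⟨hlow, (by positivity : (0:ℝ) < _).trans_le hlow⟩

theorem stmt16 (R C α C₀' η₀' : ℝ)
    (hR : 0 < R) (hC : 1 ≤ C) (hα : 0 < α) (hC₀' : 0 < C₀') (hη₀' : 0 < η₀')
    (h1 : 21 * C ^ 2 ≤ R ^ α)
    (h2 : C₀' * R ^ (-η₀' * α) < 1 / (32 * C ^ 2))
    (h3 : 36 * C ^ 2 * R ^ (-η₀' * α) ≤ 1 / 2)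
    (h' : ℕ → ℕ → ℝ)
    (h'_nonneg : ∀ p q : ℕ, p ≤ q → 0 ≤ h' p q)
    (h'_diag : ∀ q : ℕ, h' q q ≤ R - ((4 * C) ^ 2)⁻¹ * R ^ α)
    (h'_off : ∀ p q : ℕ, p < q → h' p q ≤ C₀' * R ^ (α * (1 - η₀') * ((q : ℝ) - p + 1)))
    (t' : ℕ → ℝ)
    (ht'0 : t' 0 = R - h' 0 0)
    (ht' : ∀ q : ℕ, 1 ≤ q →
      t' q = R - h' q q
        - ∑ j ∈ Finset.Icc 1 q, h' (q - j) q / ∏ i ∈ Finset.Icc 1 j, t' (q - i)) :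
    ∀ q : ℕ, ((6 * C) ^ 2)⁻¹ * R ^ α ≤ t' q ∧ 0 < t' q :=
  stmt16_general R C α C₀' η₀' hR hC hC₀' h2 h3 h' h'_diag h'_off t' ht'0 ht'
end

section
/- With the notation of the context (a generalized Cantor construction on I₀ with removed collections Ĵ_q = ⋃_{p=0}^q Ĵ_{p,q}), suppose t₀ := R − h_{0,0} > 0 and, for every q ≥ 1, t_q := R − h_{q,q} − Σ_{j=1}^q h_{q−j,q}/(Π_{i=1}^j t_{q−i}) > 0, where h_{p,q} := max_{J ∈ 𝒥_p} #{I ∈ Ĵ_{p,q} : I ⊆ J}. Then the generalized Cantor set K_∞ := ⋂_{q ≥ 0} ⋃_{I ∈ 𝒥_q} I is nonempty. -/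
/-!
The intervals of `𝒥_q` are among the `R ^ q` grid intervals of length `|I₀| / R ^ q`; since a grid
interval determines its parent, `#Par_R(𝒥_q) = R · #𝒥_q`, and writing `N_q := #𝒥_q` we get
`R N_q ≤ N_{q+1} + ∑_{p ≤ q} #Ĵ_{p,q}` with `#Ĵ_{p,q} ≤ h_{p,q} N_p`, because every interval of
`Ĵ_{p,q}` lies in one of `𝒥_p`. Strong induction then gives `N_{q-j} ∏_{i=1}^j t_{q-i} ≤ N_q`,
hence `t_q N_q ≤ N_{q+1}`, so no `𝒥_q` is empty and `K_∞` is a decreasing intersection of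
nonempty compact sets.
-/

open Set

/-- the `R`-partition of a closed interval into `R` closed subintervals of
equal length. -/
def parR (R : ℕ) (A : Set ℝ) : Set (Set ℝ) :=
  {J | ∃ x y : ℝ, A = Icc x y ∧
    ∃ k : ℕ, k < R ∧
      J = Icc (x + (k : ℝ) * ((y - x) / R)) (x + ((k : ℝ) + 1) * ((y - x) / R))}

/-- the `R`-partition of a collection of closed intervals. -/
def parRs (R : ℕ) (𝒞 : Set (Set ℝ)) : Set (Set ℝ) := ⋃ A ∈ 𝒞, parR R A

/-- `h_{p,q} = max_{J ∈ 𝒥_p} #{I ∈ Ĵ_{p,q} : I ⊆ J}` (as a real number; the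
maximum over an empty collection is `0`). -/
noncomputable def hCount (J : ℕ → Set (Set ℝ)) (Jhatpq : ℕ → ℕ → Set (Set ℝ))
    (p q : ℕ) : ℝ :=
  sSup {x : ℝ | ∃ K ∈ J p, x = (Set.ncard {I | I ∈ Jhatpq p q ∧ I ⊆ K} : ℝ)}

theorem subset_of_mem_parR {R : ℕ} {A I : Set ℝ} (h : I ∈ parR R A) : I ⊆ A := by
  obtain ⟨x, y, rfl, k, hk, rfl⟩ := h
  rintro z ⟨hz₁, hz₂⟩
  have hR : (R : ℝ) ≠ 0 := by have : 0 < R := (Nat.zero_le k).trans_lt hk; positivity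
  have hRd : (R : ℝ) * ((y - x) / R) = y - x := mul_div_cancel₀ _ hR
  have hd : 0 ≤ (y - x) / R := by linarith
  have hkR : (k : ℝ) + 1 ≤ R := by exact_mod_cast hk
  constructor <;> nlinarith [Nat.cast_nonneg (α := ℝ) k]

theorem exists_superset_of_mem_parRs {R : ℕ} {C : Set (Set ℝ)} {I : Set ℝ}
    (h : I ∈ parRs R C) : ∃ A ∈ C, I ⊆ A := by
  simp only [parRs, mem_iUnion] at h
  obtain ⟨A, hA, hI⟩ := h
  exact ⟨A, hA, subset_of_mem_parR hI⟩

theorem parRs_mono {R : ℕ} {C D : Set (Set ℝ)} (h : C ⊆ D) : parRs R C ⊆ parRs R D :=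
  biUnion_subset_biUnion_left h

theorem parR_Icc (R : ℕ) {x y : ℝ} (hxy : x ≤ y) :
    parR R (Icc x y) = (fun k : ℕ => Icc (x + k * ((y - x) / R)) (x + (k + 1) * ((y - x) / R))) ''
      Iio R := by
  ext I
  constructor
  · rintro ⟨x', y', h, k, hk, rfl⟩
    obtain ⟨rfl, rfl⟩ := (Icc_eq_Icc_iff hxy).1 h
    exact ⟨k, hk, rfl⟩
  · rintro ⟨k, hk, rfl⟩
    exact ⟨x, y, rfl, k, hk, rfl⟩

theorem Nat.eq_and_eq_of_mul_add_eq {R m k m' k' : ℕ} (hk : k < R) (hk' : k' < R)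
    (h : m * R + k = m' * R + k') : m = m' ∧ k = k' := by
  have hR : 0 < R := by omega
  obtain ⟨h₁, h₂⟩ := (Nat.div_mod_unique (a := m * R + k) (d := m) hR).2 ⟨by ring, hk⟩
  obtain ⟨h₁', h₂'⟩ := (Nat.div_mod_unique (a := m * R + k) (d := m') hR).2 ⟨by rw [h]; ring, hk'⟩
  exact ⟨h₁.symm.trans h₁', h₂.symm.trans h₂'⟩

def gridInterval (a ℓ : ℝ) (m : ℕ) : Set ℝ := Icc (a + m * ℓ) (a + (m + 1) * ℓ)

section gridInterval

variable {R : ℕ} {a ℓ : ℝ}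

theorem gridInterval_injective (hℓ : 0 < ℓ) : Function.Injective (gridInterval a ℓ) := by
  intro m n h
  have := ((Icc_eq_Icc_iff (by nlinarith)).1 h).1
  exact_mod_cast mul_right_cancel₀ hℓ.ne' (add_left_cancel this)

theorem parR_gridInterval (hℓ : 0 ≤ ℓ) (m : ℕ) :
    parR R (gridInterval a ℓ m) = (fun k => gridInterval a (ℓ / R) (m * R + k)) '' Iio R := by
  rw [gridInterval, parR_Icc R (by nlinarith)]
  refine image_congr fun k hk => ?_
  have hR : (R : ℝ) ≠ 0 := by have : 0 < R := (Nat.zero_le k).trans_lt hk; positivity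
  simp only [gridInterval]
  push_cast
  congr 1 <;> field_simp <;> ring

theorem parRs_image_gridInterval (hℓ : 0 ≤ ℓ) (M : Set ℕ) :
    parRs R (gridInterval a ℓ '' M) =
      (fun p : ℕ × ℕ => gridInterval a (ℓ / R) (p.1 * R + p.2)) '' (M ×ˢ Iio R) := by
  rw [parRs, biUnion_image]
  simp_rw [parR_gridInterval hℓ]
  ext I
  simp [and_assoc]

theorem ncard_parRs_of_subset_range_gridInterval (hℓ : 0 < ℓ) {C : Set (Set ℝ)}
    (hC : C ⊆ range (gridInterval a ℓ)) : (parRs R C).ncard = R * C.ncard := by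
  obtain ⟨M, rfl⟩ := subset_range_iff_exists_image_eq.1 hC
  have hinj : InjOn (fun p : ℕ × ℕ => gridInterval a (ℓ / R) (p.1 * R + p.2)) (M ×ˢ Iio R) := by
    rintro ⟨m, k⟩ ⟨-, hk : k < R⟩ ⟨m', k'⟩ ⟨-, hk' : k' < R⟩ h
    have hR : 0 < R := (Nat.zero_le k).trans_lt hk
    obtain ⟨rfl, rfl⟩ :=
      Nat.eq_and_eq_of_mul_add_eq hk hk' (gridInterval_injective (by positivity) h)
    rfl
  rw [parRs_image_gridInterval hℓ.le, (gridInterval_injective hℓ).injOn.ncard_image,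
    hinj.ncard_image, ncard_prod, ncard_Iio_nat, mul_comm]

end gridInterval

theorem Finset.sum_Iic_eq_add_sum_Icc_sub {M : Type*} [AddCommMonoid M] (f : ℕ → M) (q : ℕ) :
    ∑ p ∈ Finset.Iic q, f p = f q + ∑ j ∈ Finset.Icc 1 q, f (q - j) := by
  rw [← Nat.range_succ_eq_Iic, Finset.sum_range_succ, add_comm, ← Finset.Ico_add_one_right_eq_Icc,
    Finset.sum_Ico_reflect _ _ le_rfl, Nat.sub_self, Nat.add_sub_cancel, Finset.range_eq_Ico]

section CantorRecursion

variable {R : ℝ} {t N : ℕ → ℝ} {h : ℕ → ℕ → ℝ}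

theorem mul_prod_le_of_forall_lt (ht_pos : ∀ q, 0 < t q) {q : ℕ}
    (hstep : ∀ i < q, t i * N i ≤ N (i + 1)) {j : ℕ} (hj : j ≤ q) :
    N (q - j) * ∏ i ∈ Finset.Icc 1 j, t (q - i) ≤ N q := by
  induction j with
  | zero => simp
  | succ j ih =>
    have hstep' := hstep (q - (j + 1)) (by omega)
    rw [show q - (j + 1) + 1 = q - j by omega] at hstep'
    rw [Finset.prod_Icc_succ_top (by omega)]
    calc N (q - (j + 1)) * ((∏ i ∈ Finset.Icc 1 j, t (q - i)) * t (q - (j + 1)))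
        = t (q - (j + 1)) * N (q - (j + 1)) * ∏ i ∈ Finset.Icc 1 j, t (q - i) := by ring
      _ ≤ N (q - j) * ∏ i ∈ Finset.Icc 1 j, t (q - i) :=
        mul_le_mul_of_nonneg_right hstep' (Finset.prod_nonneg fun i _ => (ht_pos _).le)
      _ ≤ N q := ih (by omega)

theorem mul_le_succ_of_cantor_recursion (ht_pos : ∀ q, 0 < t q) (hh : ∀ p q, 0 ≤ h p q)
    (ht : ∀ q, t q =
      R - h q q - ∑ j ∈ Finset.Icc 1 q, h (q - j) q / ∏ i ∈ Finset.Icc 1 j, t (q - i))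
    (hN : ∀ q, R * N q ≤ N (q + 1) + ∑ p ∈ Finset.Iic q, h p q * N p) (q : ℕ) :
    t q * N q ≤ N (q + 1) := by
  induction q using Nat.strong_induction_on with
  | _ q ih =>
  have hsum : ∑ p ∈ Finset.Iic q, h p q * N p ≤ (R - t q) * N q := by
    have hRt : R - t q =
        h q q + ∑ j ∈ Finset.Icc 1 q, h (q - j) q / ∏ i ∈ Finset.Icc 1 j, t (q - i) := by
      rw [ht q]; ring
    rw [Finset.sum_Iic_eq_add_sum_Icc_sub, hRt, add_mul, Finset.sum_mul]
    refine add_le_add_right (Finset.sum_le_sum fun j hj => ?_) _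
    have hprod : 0 < ∏ i ∈ Finset.Icc 1 j, t (q - i) := Finset.prod_pos fun i _ => ht_pos _
    rw [div_mul_eq_mul_div, le_div_iff₀ hprod, mul_assoc]
    exact mul_le_mul_of_nonneg_left
      (mul_prod_le_of_forall_lt ht_pos ih (Finset.mem_Icc.1 hj).2) (hh _ _)
  linarith [hN q]

end CantorRecursion

theorem ncard_le_sSup_mul_ncard {α β : Type*} {S : Set α} {C : Set β} (r : α → β → Prop)
    (hC : C.Finite) (hcover : ∀ x ∈ S, ∃ K ∈ C, r x K) :
    (S.ncard : ℝ) ≤ sSup {y : ℝ | ∃ K ∈ C, y = ({x | x ∈ S ∧ r x K}.ncard : ℝ)} * C.ncard := by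
  set f : β → ℝ := fun K => ({x | x ∈ S ∧ r x K}.ncard : ℝ)
  have hS : S = ⋃ K ∈ hC.toFinset, {x | x ∈ S ∧ r x K} := by
    ext x
    simp only [Set.mem_iUnion, Set.Finite.mem_toFinset, Set.mem_ofPred_eq, exists_prop]
    exact ⟨fun hx => (hcover x hx).imp fun K hK => ⟨hK.1, hx, hK.2⟩, fun ⟨_, _, hx, _⟩ => hx⟩
  have hbdd : BddAbove {y : ℝ | ∃ K ∈ C, y = f K} :=
    (hC.image f).bddAbove.mono (by rintro _ ⟨K, hK, rfl⟩; exact Set.mem_image_of_mem f hK)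
  have hunion : S.ncard ≤ ∑ K ∈ hC.toFinset, {x | x ∈ S ∧ r x K}.ncard := by
    conv_lhs => rw [hS]
    exact Finset.set_ncard_biUnion_le _ _
  calc (S.ncard : ℝ) ≤ ∑ K ∈ hC.toFinset, f K := by simp only [f]; exact_mod_cast hunion
    _ ≤ ∑ K ∈ hC.toFinset, sSup {y : ℝ | ∃ K ∈ C, y = f K} :=
      Finset.sum_le_sum fun K hK => le_csSup hbdd ⟨K, hC.mem_toFinset.1 hK, rfl⟩
    _ = _ := by rw [Finset.sum_const, nsmul_eq_mul, Set.ncard_eq_toFinset_card C hC, mul_comm]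

theorem hCount_nonneg (J : ℕ → Set (Set ℝ)) (Jhatpq : ℕ → ℕ → Set (Set ℝ)) (p q : ℕ) :
    0 ≤ hCount J Jhatpq p q :=
  Real.sSup_nonneg (by rintro _ ⟨K, -, rfl⟩; positivity)

theorem nonempty_iInter_sUnion_of_refines {X : Type*} [TopologicalSpace X] [T2Space X]
    {J : ℕ → Set (Set X)} (hfin : ∀ q, (J q).Finite) (hcpt : ∀ q, ∀ A ∈ J q, IsCompact A)
    (hne : ∀ q, (⋃₀ J q).Nonempty) (hsub : ∀ q, ∀ A ∈ J (q + 1), ∃ B ∈ J q, A ⊆ B) :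
    (⋂ q, ⋃₀ J q).Nonempty := by
  have hcpt' : ∀ q, IsCompact (⋃₀ J q) := fun q => (hfin q).isCompact_sUnion (hcpt q)
  refine IsCompact.nonempty_iInter_of_sequence_nonempty_isCompact_isClosed _ (fun q => ?_) hne
    (hcpt' 0) fun q => (hcpt' q).isClosed
  exact sUnion_subset fun A hA =>
    let ⟨B, hB, hAB⟩ := hsub q A hA
    hAB.trans (subset_sUnion_of_mem hB)

section CantorConstruction

variable {R : ℕ} {J : ℕ → Set (Set ℝ)} {Jhatpq : ℕ → ℕ → Set (Set ℝ)}

theorem exists_superset_of_le (hsub : ∀ q, J (q + 1) ⊆ parRs R (J q)) {p q : ℕ} (hpq : p ≤ q)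
    {A : Set ℝ} (hA : A ∈ J q) : ∃ K ∈ J p, A ⊆ K := by
  induction q, hpq using Nat.le_induction generalizing A with
  | base => exact ⟨A, hA, subset_rfl⟩
  | succ q _ ih =>
    obtain ⟨B, hB, hAB⟩ := exists_superset_of_mem_parRs (hsub q hA)
    obtain ⟨K, hK, hBK⟩ := ih hB
    exact ⟨K, hK, hAB.trans hBK⟩

theorem subset_image_gridInterval {a b : ℝ} (hab : a ≤ b) (hJ0 : J 0 = {Icc a b})
    (hsub : ∀ q, J (q + 1) ⊆ parRs R (J q)) (q : ℕ) :
    J q ⊆ gridInterval a ((b - a) / R ^ q) '' Iio (R ^ q) := by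
  induction q with
  | zero => simp [hJ0, gridInterval]
  | succ q ih =>
    refine (hsub q).trans ((parRs_mono ih).trans ?_)
    rw [parRs_image_gridInterval (div_nonneg (sub_nonneg.2 hab) (by positivity))]
    rintro _ ⟨⟨m, k⟩, ⟨hm : m < R ^ q, hk : k < R⟩, rfl⟩
    refine ⟨m * R + k, ?_, by rw [pow_succ, div_div]⟩
    calc m * R + k < (m + 1) * R := by linarith
      _ ≤ R ^ q * R := Nat.mul_le_mul_right _ hm
      _ = R ^ (q + 1) := (pow_succ _ _).symm

theorem mul_ncard_le_ncard_succ_add {a ℓ : ℝ} (hℓ : 0 < ℓ) {q : ℕ}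
    (hgrid : J q ⊆ range (gridInterval a ℓ)) (hfin : ∀ p, (J p).Finite)
    (hJhat_sub : ∀ p q, p ≤ q → Jhatpq p q ⊆ parRs R (J q))
    (hJsucc : ∀ q, J (q + 1) = parRs R (J q) \ ⋃ p ∈ Finset.Iic q, Jhatpq p q) :
    (R : ℝ) * (J q).ncard ≤
      (J (q + 1)).ncard + ∑ p ∈ Finset.Iic q, hCount J Jhatpq p q * (J p).ncard := by
  have hsub : ∀ q, J (q + 1) ⊆ parRs R (J q) := fun q => (hJsucc q).trans_subset sdiff_subset
  have hsplit : parRs R (J q) = J (q + 1) ∪ ⋃ p ∈ Finset.Iic q, Jhatpq p q := by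
    rw [hJsucc, sdiff_union_of_subset]
    exact iUnion₂_subset fun p hp => hJhat_sub p q (Finset.mem_Iic.1 hp)
  have hhat : ∀ p ∈ Finset.Iic q,
      ((Jhatpq p q).ncard : ℝ) ≤ hCount J Jhatpq p q * (J p).ncard := by
    intro p hp
    rw [hCount]
    refine ncard_le_sSup_mul_ncard (S := Jhatpq p q) (C := J p) (fun I K => I ⊆ K) (hfin p)
      fun I hI => ?_
    obtain ⟨A, hA, hIA⟩ := exists_superset_of_mem_parRs (hJhat_sub p q (Finset.mem_Iic.1 hp) hI)
    obtain ⟨K, hK, hAK⟩ := exists_superset_of_le hsub (Finset.mem_Iic.1 hp) hA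
    exact ⟨K, hK, hIA.trans hAK⟩
  have hcount : (parRs R (J q)).ncard ≤
      (J (q + 1)).ncard + ∑ p ∈ Finset.Iic q, (Jhatpq p q).ncard := by
    rw [hsplit]
    exact (ncard_union_le _ _).trans (add_le_add_right (Finset.set_ncard_biUnion_le _ _) _)
  calc (R : ℝ) * (J q).ncard = (parRs R (J q)).ncard := by
        rw [ncard_parRs_of_subset_range_gridInterval hℓ hgrid]; push_cast; rfl
    _ ≤ (J (q + 1)).ncard + ∑ p ∈ Finset.Iic q, ((Jhatpq p q).ncard : ℝ) := by exact_mod_cast hcount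
    _ ≤ _ := add_le_add_right (Finset.sum_le_sum hhat) _

end CantorConstruction

theorem stmt17 (R : ℕ) (hR : 2 ≤ R) (a b : ℝ) (hab : a < b)
    (J : ℕ → Set (Set ℝ)) (Jhatpq : ℕ → ℕ → Set (Set ℝ))
    (hJ0 : J 0 = {Icc a b})
    (hJhat_sub : ∀ p q, p ≤ q → Jhatpq p q ⊆ parRs R (J q))
    (hJsucc : ∀ q, J (q + 1) = parRs R (J q) \ ⋃ p ∈ Finset.Iic q, Jhatpq p q)
    (t : ℕ → ℝ)
    (ht0 : t 0 = R - hCount J Jhatpq 0 0)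
    (ht : ∀ q : ℕ, 1 ≤ q →
      t q = R - hCount J Jhatpq q q
        - ∑ j ∈ Finset.Icc 1 q, hCount J Jhatpq (q - j) q / ∏ i ∈ Finset.Icc 1 j, t (q - i))
    (ht_pos : ∀ q : ℕ, 0 < t q) :
    (⋂ q : ℕ, ⋃₀ J q).Nonempty := by
  have hsub : ∀ q, J (q + 1) ⊆ parRs R (J q) := fun q => (hJsucc q).trans_subset sdiff_subset
  have hgrid := subset_image_gridInterval hab.le hJ0 hsub
  have hfin : ∀ q, (J q).Finite := fun q => ((finite_Iio _).image _).subset (hgrid q)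
  have hℓ : ∀ q, 0 < (b - a) / R ^ q := fun q => div_pos (sub_pos.2 hab) (by positivity)
  have ht' : ∀ q, t q = R - hCount J Jhatpq q q -
      ∑ j ∈ Finset.Icc 1 q, hCount J Jhatpq (q - j) q / ∏ i ∈ Finset.Icc 1 j, t (q - i) := by
    rintro (_ | q)
    · simpa using ht0
    · exact ht _ q.succ_pos
  have hcard : ∀ q, 0 < ((J q).ncard : ℝ) := by
    intro q
    induction q with
    | zero => simp [hJ0]
    | succ q ih =>
      refine (mul_pos (ht_pos q) ih).trans_le (mul_le_succ_of_cantor_recursion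
        (N := fun q => ((J q).ncard : ℝ)) ht_pos (hCount_nonneg J Jhatpq) ht' (fun q => ?_) q)
      exact mul_ncard_le_ncard_succ_add (hℓ q) ((hgrid q).trans (image_subset_range _ _)) hfin
        hJhat_sub hJsucc
  refine nonempty_iInter_sUnion_of_refines hfin (fun q A hA => ?_) (fun q => ?_)
    fun q A hA => exists_superset_of_mem_parRs (hsub q hA)
  · obtain ⟨m, -, rfl⟩ := hgrid q hA
    exact isCompact_Icc
  · obtain ⟨A, hA⟩ := nonempty_of_ncard_ne_zero (by exact_mod_cast (hcard q).ne' : (J q).ncard ≠ 0)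
    obtain ⟨m, -, rfl⟩ := hgrid q hA
    exact ⟨_, _, hA, left_mem_Icc.2 (by nlinarith [hℓ q])⟩
end
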